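/- arXiv:2305.05071 — 3 statements merged into one kernel-verified Lean document; each statement's English description precedes it below -/
import Mathlib

section
/- Suppose y_1,...,y_s are nonzero integers, c_1,...,c_s are integers, z is an integer, and x_1,...,x_s are integers satisfying ∑_{i=1}^s c_i y_i^{k-j} (x_i - y_i z)^j = 0 for all 1 ≤ j ≤ k-1. Then, writing c_0 = -(c_1 y_1^k + ... + c_s y_s^k), one has c_0 z^j + ∑_{i=1}^s c_i y_i^{k-j} x_i^j = 0 for all 1 ≤ j ≤ k-1. -/
/-- Key translation-invariance identity from Lemma 2.1: from the lower-degree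
relations for the shifted variables `x i - y i * z`, one deduces the lower-degree
relations for `x` with the extra variable `z` of coefficient
`c₀ = -(c₁y₁^k + ⋯ + c_sy_s^k)`. -/
theorem stmt_1 (k s : ℕ) (hk : 2 ≤ k) (c y x : Fin s → ℤ) (z : ℤ)
    (hy : ∀ i, y i ≠ 0)
    (hsys : ∀ j : ℕ, 1 ≤ j → j ≤ k - 1 →
      ∑ i, c i * y i ^ (k - j) * (x i - y i * z) ^ j = 0) :
    ∀ j : ℕ, 1 ≤ j → j ≤ k - 1 →
      (-(∑ i, c i * y i ^ k)) * z ^ j + ∑ i, c i * y i ^ (k - j) * x i ^ j = 0 := by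
  set A := ∑ i, c i * y i ^ k with hA
  suffices H : ∀ j : ℕ, j ≤ k - 1 →
      ∑ i, c i * y i ^ (k - j) * x i ^ j = A * z ^ j by
    intro j h1 h2
    rw [H j h2]; ring
  intro j
  induction j using Nat.strong_induction_on with
  | _ j IH =>
    intro hj
    rcases Nat.eq_zero_or_pos j with rfl | hj1
    · simp [hA]
    · have h0 := hsys j hj1 hj
      have key : ∑ i, c i * y i ^ (k - j) * (x i - y i * z) ^ j
          = ∑ m ∈ Finset.range (j+1),
              (j.choose m : ℤ) * (-z)^(j-m) * ∑ i, c i * y i ^ (k - m) * x i ^ m := by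
        simp_rw [sub_eq_add_neg, add_pow, Finset.mul_sum]
        rw [Finset.sum_comm]
        refine Finset.sum_congr rfl ?_
        intro m hm
        refine Finset.sum_congr rfl ?_
        intro i _
        have hmj : m ≤ j := Nat.lt_succ_iff.mp (Finset.mem_range.mp hm)
        have hpow : y i ^ (k - j) * y i ^ (j - m) = y i ^ (k - m) := by
          rw [← pow_add]; congr 1; omega
        have hneg : (-(y i * z))^(j - m) = y i ^ (j-m) * (-z)^(j-m) := by
          rw [show -(y i * z) = y i * (-z) by ring, mul_pow]
        rw [hneg, ← hpow]; ring
      have sums : ∑ m ∈ Finset.range (j+1),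
          (j.choose m : ℤ) * (-z)^(j-m) * ∑ i, c i * y i ^ (k - m) * x i ^ m = 0 := by
        rw [← key, h0]
      have zero : ∑ m ∈ Finset.range (j+1),
          (j.choose m : ℤ) * (-z)^(j-m) * (A * z ^ m) = 0 := by
        have hb : (z + -z)^j = ∑ m ∈ Finset.range (j+1), z^m * (-z)^(j-m) * (j.choose m : ℤ) :=
          add_pow z (-z) j
        have : ∑ m ∈ Finset.range (j+1),
            (j.choose m : ℤ) * (-z)^(j-m) * (A * z ^ m) = A * (z + -z)^j := by
          rw [hb, Finset.mul_sum]
          refine Finset.sum_congr rfl fun m _ => by ring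
        rw [this]
        simp [zero_pow hj1.ne']
      -- split the last term off both sums
      rw [Finset.sum_range_succ] at sums zero
      have IHs : ∀ m ∈ Finset.range j,
          (j.choose m : ℤ) * (-z)^(j-m) * ∑ i, c i * y i ^ (k - m) * x i ^ m
          = (j.choose m : ℤ) * (-z)^(j-m) * (A * z ^ m) := by
        intro m hm
        have hmj : m < j := Finset.mem_range.mp hm
        rw [IH m hmj (by omega)]
      rw [Finset.sum_congr rfl IHs] at sums
      have hcj : (j.choose j : ℤ) = 1 := by simp
      rw [hcj] at sums zero
      simp only [Nat.sub_self, pow_zero] at sums zero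
      linarith
end

section
/- Let y_1,...,y_s be nonzero integers, c_1,...,c_s nonzero integers, n a nonzero integer with c_1 y_1^k + ... + c_s y_s^k = n, and suppose y satisfies the 'no vanishing subsums' condition: for every nonempty subset S of {1,...,s}, ∑_{i∈S} c_i y_i^k ≠ 0. Let F be a field of characteristic zero (e.g. ℝ or ℚ_p) and let z ∈ F^s be a nonzero solution of the system ∑_{i=1}^s c_i y_i^{k-j} z_i^j = 0 for 1 ≤ j ≤ k. Then z is a non-singular solution: the Jacobian matrix (j c_i y_i^{k-j} z_i^{j-1})_{1≤j≤k, 1≤i≤s} has rank k. -/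
open Polynomial Finset Module

lemma pow_helper' {F : Type*} [Field F] (yF zF : F) (hy : yF ≠ 0) (m j : ℕ) (hj : j ≤ m) :
    yF ^ m * (zF * yF⁻¹) ^ j = yF ^ (m - j) * zF ^ j := by
  have h : m - j + j = m := Nat.sub_add_cancel hj
  rw [← h, pow_add, mul_pow, inv_pow]
  field_simp
  rw [Nat.add_sub_cancel]
  ring

/-- Section 7 main conclusion: under the no-vanishing-subsums condition, any
nonzero solution `z` over a field of characteristic zero of the system
`∑ i, c i * y i ^ (k - j) * z i ^ j = 0` (1 ≤ j ≤ k) is non-singular, i.e. the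
`k × s` Jacobian matrix `(j * c i * y i ^ (k - j) * z i ^ (j - 1))` has rank `k`. -/
theorem stmt_3 (k s : ℕ) (hk : 2 ≤ k) (hs : k ≤ s)
    (c y : Fin s → ℤ) (n : ℤ) (hn : n ≠ 0)
    (hc : ∀ i, c i ≠ 0) (hy : ∀ i, y i ≠ 0)
    (hsol : ∑ i, c i * y i ^ k = n)
    (hnovanish : ∀ S : Finset (Fin s), S.Nonempty → ∑ i ∈ S, c i * y i ^ k ≠ 0)
    (F : Type*) [Field F] [CharZero F] (z : Fin s → F) (hz : z ≠ 0)
    (hzsys : ∀ j : ℕ, 1 ≤ j → j ≤ k →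
      ∑ i, (c i : F) * (y i : F) ^ (k - j) * z i ^ j = 0) :
    Matrix.rank (Matrix.of fun (j : Fin k) (i : Fin s) =>
      (((j : ℕ) + 1 : ℕ) : F) * (c i : F) * (y i : F) ^ (k - ((j : ℕ) + 1)) *
        z i ^ (j : ℕ)) = k := by
  classical
  set A : Matrix (Fin k) (Fin s) F := Matrix.of fun (j : Fin k) (i : Fin s) =>
      (((j : ℕ) + 1 : ℕ) : F) * (c i : F) * (y i : F) ^ (k - ((j : ℕ) + 1)) *
        z i ^ (j : ℕ) with hA
  have hyF : ∀ i, (y i : F) ≠ 0 := fun i => Int.cast_ne_zero.mpr (hy i)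
  have hcF : ∀ i, (c i : F) ≠ 0 := fun i => Int.cast_ne_zero.mpr (hc i)
  set w : Fin s → F := fun i => z i * (y i : F)⁻¹ with hw
  -- the grouped sums
  set b : Fin s → F := fun i => (c i : F) * (y i : F) ^ k with hb
  have hbw : ∀ j : ℕ, 1 ≤ j → j ≤ k → ∑ i, b i * w i ^ j = 0 := by
    intro j hj1 hjk
    have := hzsys j hj1 hjk
    rw [← this]
    refine Finset.sum_congr rfl fun i _ => ?_
    rw [hb, hw]
    rw [mul_assoc, pow_helper' (y i : F) (z i) (hyF i) k j hjk, ← mul_assoc]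
  set V : Finset F := Finset.image w Finset.univ with hV
  set a : F → F := fun v => ∑ i ∈ Finset.univ.filter (fun i => w i = v), b i with ha
  -- grouped system
  have hgroup : ∀ j : ℕ, 1 ≤ j → j ≤ k → ∑ v ∈ V, a v * v ^ j = 0 := by
    intro j hj1 hjk
    rw [← hbw j hj1 hjk]
    rw [← Finset.sum_fiberwise_of_maps_to (g := w) (t := V)
      (fun i _ => Finset.mem_image_of_mem w (Finset.mem_univ i)) (fun i => b i * w i ^ j)]
    refine Finset.sum_congr rfl fun v hv => ?_
    rw [ha, Finset.sum_mul]
    refine Finset.sum_congr rfl fun i hi => ?_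
    rw [(Finset.mem_filter.mp hi).2]
  -- a v ≠ 0 for v ∈ V
  have haV : ∀ v ∈ V, a v ≠ 0 := by
    intro v hv
    obtain ⟨i₀, _, hi₀⟩ := Finset.mem_image.mp hv
    set S := Finset.univ.filter (fun i => w i = v) with hS
    have hSne : S.Nonempty := ⟨i₀, Finset.mem_filter.mpr ⟨Finset.mem_univ _, hi₀⟩⟩
    have : a v = ((∑ i ∈ S, c i * y i ^ k : ℤ) : F) := by
      rw [ha, hS]; push_cast; rfl
    rw [this]
    exact_mod_cast hnovanish S hSne
  -- key: every nonzero v ∈ V gives contradiction once |V| ≤ k - 1,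
  -- via the Lagrange basis polynomial on insert 0 V
  have hkey : ∀ v ∈ V, V.card ≤ k - 1 → v ≠ 0 → False := by
    intro u huV hVcard hu0
    set V₀ : Finset F := insert (0 : F) V with hV₀
    have hV₀card : V₀.card ≤ k := by
      calc V₀.card ≤ V.card + 1 := Finset.card_insert_le _ _
        _ ≤ (k - 1) + 1 := by omega
        _ = k := by omega
    set R : F[X] := Lagrange.basis V₀ id u with hR
    have hinj : Set.InjOn (id : F → F) V₀ := fun x _ y _ h => h
    have huV₀ : u ∈ V₀ := Finset.mem_insert_of_mem huV
    have hRdeg : R.natDegree ≤ k := by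
      rw [hR, Lagrange.natDegree_basis hinj huV₀]; omega
    have hReval0 : R.eval 0 = 0 := by
      have := Lagrange.eval_basis_of_ne (s := V₀) (v := (id : F → F)) (i := u) (j := (0:F))
        hu0 (Finset.mem_insert_self _ _)
      simpa using this
    -- ∑_{v ∈ V} a v * R.eval v = 0
    have hsum0 : ∑ v ∈ V, a v * R.eval v = 0 := by
      have heval : ∀ v : F, R.eval v = ∑ m ∈ Finset.range (k + 1), R.coeff m * v ^ m := by
        intro v
        exact Polynomial.eval_eq_sum_range' (Nat.lt_succ_of_le hRdeg) v
      calc ∑ v ∈ V, a v * R.eval v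
          = ∑ v ∈ V, ∑ m ∈ Finset.range (k + 1), R.coeff m * (a v * v ^ m) := by
            refine Finset.sum_congr rfl fun v _ => ?_
            rw [heval v, Finset.mul_sum]
            refine Finset.sum_congr rfl fun m _ => by ring
        _ = ∑ m ∈ Finset.range (k + 1), R.coeff m * ∑ v ∈ V, a v * v ^ m := by
            rw [Finset.sum_comm]
            exact Finset.sum_congr rfl fun m _ => by rw [Finset.mul_sum]
        _ = 0 := by
            refine Finset.sum_eq_zero fun m hm => ?_
            rcases Nat.eq_zero_or_pos m with hm0 | hm1
            · subst hm0
              rw [Polynomial.coeff_zero_eq_eval_zero, hReval0, zero_mul]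
            · rw [hgroup m hm1 (by simpa using Nat.lt_succ_iff.mp (Finset.mem_range.mp hm)),
                mul_zero]
    -- but it also equals a u
    have hsumu : ∑ v ∈ V, a v * R.eval v = a u := by
      rw [Finset.sum_eq_single u]
      · rw [hR]
        have := Lagrange.eval_basis_self hinj huV₀
        simp only [id] at this
        rw [this, mul_one]
      · intro v hv hvu
        have : R.eval v = 0 := by
          have := Lagrange.eval_basis_of_ne (s := V₀) (v := (id : F → F)) (i := u) (j := v)
            (fun h => hvu (by simpa using h.symm)) (Finset.mem_insert_of_mem hv)
          simpa using this
        rw [this, mul_zero]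
      · intro h; exact absurd huV h
    exact haV u huV (by rw [← hsumu, hsum0])
  -- rows of A are linearly independent
  have hli : LinearIndependent F (fun j : Fin k => A j) := by
    rw [Fintype.linearIndependent_iff]
    intro g hg
    by_contra hgne
    push_neg at hgne
    obtain ⟨j₀, hj₀⟩ := hgne
    -- polynomial P
    set P : F[X] := ∑ j : Fin k, Polynomial.C (g j * (((j : ℕ) + 1 : ℕ) : F)) * Polynomial.X ^ (j : ℕ)
      with hP
    have hPcoeff : ∀ j : Fin k, P.coeff (j : ℕ) = g j * (((j : ℕ) + 1 : ℕ) : F) := by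
      intro j
      rw [hP, Polynomial.finset_sum_coeff]
      rw [Finset.sum_eq_single j]
      · rw [Polynomial.coeff_C_mul, Polynomial.coeff_X_pow, if_pos rfl, mul_one]
      · intro j' _ hj'
        rw [Polynomial.coeff_C_mul, Polynomial.coeff_X_pow,
          if_neg (fun h => hj' (Fin.val_injective h.symm)), mul_zero]
      · simp
    have hPne : P ≠ 0 := by
      intro h
      apply hj₀
      have := hPcoeff j₀
      rw [h, Polynomial.coeff_zero] at this
      have h1 : (((j₀ : ℕ) + 1 : ℕ) : F) ≠ 0 := Nat.cast_ne_zero.mpr (Nat.succ_ne_zero _)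
      exact (mul_eq_zero.mp this.symm).resolve_right h1 |>.symm ▸ rfl
    have hPdeg : P.natDegree ≤ k - 1 := by
      rw [hP]
      refine Polynomial.natDegree_sum_le_of_forall_le _ _ fun j _ => ?_
      exact (Polynomial.natDegree_C_mul_X_pow_le _ _).trans (by omega)
    -- each w i is a root of P
    have hProot : ∀ i, P.eval (w i) = 0 := by
      intro i
      have hgi : ∑ j : Fin k, g j * A j i = 0 := by
        have := congrFun hg i
        simpa using this
      have hfac : ∑ j : Fin k, g j * A j i
          = (c i : F) * (y i : F) ^ (k - 1) * P.eval (w i) := by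
        rw [hP, Polynomial.eval_finset_sum, Finset.mul_sum]
        refine Finset.sum_congr rfl fun j _ => ?_
        simp only [hA, Matrix.of_apply, Polynomial.eval_mul, Polynomial.eval_C,
          Polynomial.eval_pow, Polynomial.eval_X]
        have : (y i : F) ^ (k - 1) * w i ^ (j : ℕ)
            = (y i : F) ^ (k - ((j : ℕ) + 1)) * z i ^ (j : ℕ) := by
          have h1 : (k - 1) - (j : ℕ) = k - ((j : ℕ) + 1) := by omega
          rw [hw, pow_helper' (y i : F) (z i) (hyF i) (k - 1) (j : ℕ) (by omega), h1]
        calc g j * ((((j : ℕ) + 1 : ℕ) : F) * (c i : F) * (y i : F) ^ (k - ((j : ℕ) + 1)) * z i ^ (j : ℕ))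
            = (c i : F) * ((y i : F) ^ (k - ((j : ℕ) + 1)) * z i ^ (j : ℕ)) * (g j * (((j : ℕ) + 1 : ℕ) : F)) := by ring
          _ = (c i : F) * ((y i : F) ^ (k - 1) * w i ^ (j : ℕ)) * (g j * (((j : ℕ) + 1 : ℕ) : F)) := by rw [this]
          _ = (c i : F) * (y i : F) ^ (k - 1) * (g j * (((j : ℕ) + 1 : ℕ) : F) * w i ^ (j : ℕ)) := by ring
      rw [hfac] at hgi
      have hne : (c i : F) * (y i : F) ^ (k - 1) ≠ 0 :=
        mul_ne_zero (hcF i) (pow_ne_zero _ (hyF i))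
      exact (mul_eq_zero.mp hgi).resolve_left hne
    -- so V ⊆ roots of P, giving |V| ≤ k - 1
    have hVcard : V.card ≤ k - 1 := by
      have hsub : V ⊆ P.roots.toFinset := by
        intro v hv
        obtain ⟨i, _, hi⟩ := Finset.mem_image.mp hv
        rw [Multiset.mem_toFinset, Polynomial.mem_roots hPne, Polynomial.IsRoot, ← hi]
        exact hProot i
      calc V.card ≤ P.roots.toFinset.card := Finset.card_le_card hsub
        _ ≤ Multiset.card P.roots := Multiset.toFinset_card_le _
        _ ≤ P.natDegree := Polynomial.card_roots' P
        _ ≤ k - 1 := hPdeg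
    -- every v ∈ V is zero, so z = 0, contradiction
    apply hz
    funext i
    have hwi : w i = 0 := by
      by_contra hwi
      exact hkey (w i) (Finset.mem_image_of_mem w (Finset.mem_univ i)) hVcard hwi
    have : z i * (y i : F)⁻¹ = 0 := hwi
    rcases mul_eq_zero.mp this with h | h
    · exact h
    · exact absurd (inv_eq_zero.mp h) (hyF i)
  -- conclude rank = k
  have h1 : Matrix.rank (Matrix.transpose A) = Matrix.rank A := Matrix.rank_transpose A
  have h2 := Matrix.rank_eq_finrank_span_cols (Matrix.transpose A)
  change A.transpose.rank = finrank F (Submodule.span F (Set.range A)) at h2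
  rw [← h1, h2]
  have h3 : Set.range A = Set.range (fun j : Fin k => A j) := rfl
  rw [h3, finrank_span_eq_card hli, Fintype.card_fin]
end

section
/- Let k ≥ 2 and let z ∈ ℝ^s (or more generally z in a field of characteristic zero) be a solution of ∑_{i=1}^s c_i y_i^{k-j} z_i^j = 0 for 1 ≤ j ≤ k, where the y_i are nonzero and c_1 y_1^k + ... + c_s y_s^k = n ≠ 0, and suppose z_i ≠ 0 for all 1 ≤ i ≤ s. Then z is a non-singular solution of the system, i.e. the k×s Jacobian matrix (j c_i y_i^{k-j} z_i^{j-1}) has rank k. -/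
/-- Second generic non-singularity criterion (Section 7): if all coordinates of
the solution `z` are nonzero, then `z` is a non-singular solution of the system,
i.e. the `k × s` Jacobian matrix has rank `k`. -/
theorem stmt_6 (k s : ℕ) (hk : 2 ≤ k) (hs : k ≤ s)
    (c y : Fin s → ℤ) (n : ℤ) (hn : n ≠ 0)
    (hc : ∀ i, c i ≠ 0) (hy : ∀ i, y i ≠ 0)
    (hsol : ∑ i, c i * y i ^ k = n)
    (F : Type*) [Field F] [CharZero F] (z : Fin s → F) (hz : ∀ i, z i ≠ 0)
    (hzsys : ∀ j : ℕ, 1 ≤ j → j ≤ k →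
      ∑ i, (c i : F) * (y i : F) ^ (k - j) * z i ^ j = 0) :
    Matrix.rank (Matrix.of fun (j : Fin k) (i : Fin s) =>
      (((j : ℕ) + 1 : ℕ) : F) * (c i : F) * (y i : F) ^ (k - ((j : ℕ) + 1)) *
        z i ^ (j : ℕ)) = k := by
  classical
  have hnF : (n : F) ≠ 0 := Int.cast_ne_zero.mpr hn
  have hyF : ∀ i, (y i : F) ≠ 0 := fun i => Int.cast_ne_zero.mpr (hy i)
  have hcF : ∀ i, (c i : F) ≠ 0 := fun i => Int.cast_ne_zero.mpr (hc i)
  set t : Fin s → F := fun i => z i / (y i : F) with ht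
  have htne : ∀ i, t i ≠ 0 := fun i => div_ne_zero (hz i) (hyF i)
  set B : Fin s → F := fun i => (c i : F) * (y i : F) ^ k with hB
  have hBsum : ∑ i, B i = (n : F) := by
    rw [← hsol]
    push_cast
    rfl
  have hyt : ∀ i, (y i : F) * t i = z i := by
    intro i
    rw [ht]
    exact mul_div_cancel₀ (z i) (hyF i)
  have hcancel : ∀ (i : Fin s) (m : ℕ), (y i : F) ^ m * t i ^ m = z i ^ m := by
    intro i m
    rw [← mul_pow, hyt]
  have hBt : ∀ j : ℕ, 1 ≤ j → j ≤ k → ∑ i, B i * t i ^ j = 0 := by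
    intro j h1 h2
    rw [← hzsys j h1 h2]
    refine Finset.sum_congr rfl fun i _ => ?_
    have hyk : (y i : F) ^ k = (y i : F) ^ (k - j) * (y i : F) ^ j := by
      rw [← pow_add, Nat.sub_add_cancel h2]
    rw [hB]
    simp only
    rw [hyk]
    linear_combination ((c i : F) * (y i : F) ^ (k - j)) * hcancel i j
  -- linear independence of the rows
  have key : LinearIndependent F (Matrix.of fun (j : Fin k) (i : Fin s) =>
      (((j : ℕ) + 1 : ℕ) : F) * (c i : F) * (y i : F) ^ (k - ((j : ℕ) + 1)) *
        z i ^ (j : ℕ)) := by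
    refine Fintype.linearIndependent_iff.mpr ?_
    intro a ha
    by_contra hcon
    push_neg at hcon
    obtain ⟨j0, hj0⟩ := hcon
    -- the polynomial P with all t i as roots
    set P : Polynomial F :=
      ∑ j : Fin k, Polynomial.C (a j * (((j : ℕ) + 1 : ℕ) : F)) * Polynomial.X ^ (j : ℕ)
      with hP
    have hPcoeff : ∀ j : Fin k, P.coeff (j : ℕ) = a j * (((j : ℕ) + 1 : ℕ) : F) := by
      intro j
      rw [hP, Polynomial.finset_sum_coeff]
      simp only [Polynomial.coeff_C_mul, Polynomial.coeff_X_pow]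
      rw [Finset.sum_eq_single j]
      · simp
      · intro b _ hb
        have hne : (b : ℕ) ≠ (j : ℕ) := fun h => hb (Fin.ext h)
        rw [if_neg (fun h => hne h.symm), mul_zero]
      · simp
    have hPne : P ≠ 0 := by
      intro h
      apply hj0
      have hc0 := hPcoeff j0
      rw [h, Polynomial.coeff_zero] at hc0
      have hne : (((j0 : ℕ) + 1 : ℕ) : F) ≠ 0 :=
        Nat.cast_ne_zero.mpr (Nat.succ_ne_zero _)
      exact (mul_eq_zero.mp hc0.symm).resolve_right hne
    have hPdeg : P.natDegree ≤ k - 1 := by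
      rw [hP]
      refine Polynomial.natDegree_sum_le_of_forall_le _ _ fun j _ => ?_
      refine le_trans (Polynomial.natDegree_C_mul_le _ _) ?_
      rw [Polynomial.natDegree_X_pow]
      omega
    have hPeval : ∀ x : F, P.eval x = ∑ j : Fin k, a j * (((j : ℕ) + 1 : ℕ) : F) * x ^ (j : ℕ) := by
      intro x
      rw [hP, Polynomial.eval_finset_sum]
      simp
    have hroot : ∀ i, P.eval (t i) = 0 := by
      intro i
      have hai := congrFun ha i
      simp only [Finset.sum_apply, Pi.smul_apply, Matrix.of_apply, smul_eq_mul,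
        Pi.zero_apply] at hai
      have hmain : (c i : F) * (y i : F) ^ (k - 1) * P.eval (t i) = 0 := by
        rw [hPeval, Finset.mul_sum, ← hai]
        refine Finset.sum_congr rfl fun j _ => ?_
        have hjk : (j : ℕ) + 1 ≤ k := j.2
        have hyk1 : (y i : F) ^ (k - 1) =
            (y i : F) ^ (k - ((j : ℕ) + 1)) * (y i : F) ^ (j : ℕ) := by
          rw [← pow_add]
          congr 1
          omega
        rw [hyk1]
        linear_combination (a j * (((j : ℕ) + 1 : ℕ) : F) * (c i : F) *
          (y i : F) ^ (k - ((j : ℕ) + 1))) * hcancel i (j : ℕ)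
      have h1 : (c i : F) * (y i : F) ^ (k - 1) ≠ 0 :=
        mul_ne_zero (hcF i) (pow_ne_zero _ (hyF i))
      exact (mul_eq_zero.mp hmain).resolve_left h1
    -- the image of t is a small set of nonzero elements
    set S : Finset F := Finset.image t Finset.univ with hS
    have hSsub : S ⊆ P.roots.toFinset := by
      intro τ hτ
      rw [hS, Finset.mem_image] at hτ
      obtain ⟨i, _, rfl⟩ := hτ
      rw [Multiset.mem_toFinset, Polynomial.mem_roots hPne]
      exact hroot i
    have hScard : S.card ≤ k - 1 := by
      calc S.card ≤ P.roots.toFinset.card := Finset.card_le_card hSsub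
        _ ≤ Multiset.card P.roots := Multiset.toFinset_card_le _
        _ ≤ P.natDegree := Polynomial.card_roots' P
        _ ≤ k - 1 := hPdeg
    -- the auxiliary polynomial q
    set q : Polynomial F := ∏ τ ∈ S, (1 - Polynomial.C τ⁻¹ * Polynomial.X) with hq
    have hqdeg : q.natDegree ≤ k - 1 := by
      refine le_trans (Polynomial.natDegree_prod_le _ _) ?_
      refine le_trans (Finset.sum_le_card_nsmul _ _ 1 fun τ _ => ?_) (by simpa using hScard)
      have h2 : (Polynomial.C τ⁻¹ * Polynomial.X).natDegree ≤ 1 :=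
        le_trans (Polynomial.natDegree_C_mul_le _ _) (le_of_eq Polynomial.natDegree_X)
      refine le_trans (Polynomial.natDegree_sub_le _ _) (max_le (by simp) h2)
    have hq0 : q.coeff 0 = 1 := by
      rw [Polynomial.coeff_zero_eq_eval_zero, hq, Polynomial.eval_prod]
      simp
    have hqroot : ∀ i, q.eval (t i) = 0 := by
      intro i
      rw [hq, Polynomial.eval_prod]
      refine Finset.prod_eq_zero (Finset.mem_image_of_mem t (Finset.mem_univ i)) ?_
      simp [inv_mul_cancel₀ (htne i)]
    -- evaluate and derive the contradiction
    have hexp : ∀ i, q.eval (t i) = ∑ j ∈ Finset.range k, q.coeff j * t i ^ j := by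
      intro i
      exact Polynomial.eval_eq_sum_range' (lt_of_le_of_lt hqdeg (by omega)) _
    have hzero : (0 : F) = ∑ i, B i * q.eval (t i) := by
      simp [hqroot]
    rw [Finset.sum_congr rfl fun i _ => by rw [hexp i]] at hzero
    have hswap : ∑ i, B i * ∑ j ∈ Finset.range k, q.coeff j * t i ^ j
        = ∑ j ∈ Finset.range k, q.coeff j * ∑ i, B i * t i ^ j := by
      simp_rw [Finset.mul_sum]
      rw [Finset.sum_comm]
      exact Finset.sum_congr rfl fun j _ => Finset.sum_congr rfl fun i _ => by ring
    rw [hswap] at hzero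
    have hsingle : ∑ j ∈ Finset.range k, q.coeff j * ∑ i, B i * t i ^ j = (n : F) := by
      rw [Finset.sum_eq_single 0]
      · simp [hq0, hBsum]
      · intro j hj hj0
        rw [hBt j (Nat.one_le_iff_ne_zero.mpr hj0) (le_of_lt (Finset.mem_range.mp hj)),
          mul_zero]
      · intro h
        exact absurd (Finset.mem_range.mpr (by omega)) h
    rw [hsingle] at hzero
    exact hnF hzero.symm
  rw [key.rank_matrix, Fintype.card_fin]
end
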